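/- arXiv:q-alg/9711023 — 2 statements merged into one kernel-verified Lean document; each statement's English description precedes it below -/
import Mathlib

section
/- Let $\mathfrak{g}=\mathfrak{sl}(n+1,\mathbb{C})$ and let $w=\sum_{p=1}^{m}(w_p E_{p,0}+w_p' E_{n,p})$ with $m=n-1$, $x_\psi=E_{0,n}$, $x_0=E_{n,0}$. Then $\frac{1}{24}(\mathrm{ad}\,w)^4(x_\psi)=\frac{1}{4}\big(\sum_{p=1}^m w_p w_p'\big)^2 x_0$. -/
/-- in `𝔰𝔩(n+1,ℂ)`, with `w = ∑_{p=1}^{m} (w_p E_{p,0} + w'_p E_{n,p})`,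
`m = n-1`, `x_ψ = E_{0,n}`, `x₀ = E_{n,0}`, one has
`(1/24)(ad w)⁴(x_ψ) = ¼ (∑_p w_p w'_p)² x₀`. -/
theorem ad_fourth_power_sl
    {n : ℕ} (hn : 2 ≤ n) (w w' : Fin (n-1) → ℂ)
    (W : Matrix (Fin (n+1)) (Fin (n+1)) ℂ)
    (hW : W = ∑ p : Fin (n-1),
      (w p • Matrix.single
          (⟨p.1 + 1, by have := p.isLt; omega⟩ : Fin (n+1)) (0 : Fin (n+1)) (1:ℂ) +
       w' p • Matrix.single (Fin.last n)
          (⟨p.1 + 1, by have := p.isLt; omega⟩ : Fin (n+1)) (1:ℂ))) :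
    (1/24 : ℂ) •
      (fun y => W * y - y * W)^[4]
        (Matrix.single (0 : Fin (n+1)) (Fin.last n) (1:ℂ)) =
    ((1/4 : ℂ) * (∑ p : Fin (n-1), w p * w' p) ^ 2) •
      Matrix.single (Fin.last n) (0 : Fin (n+1)) (1:ℂ) := by
  set s : ℂ := ∑ p : Fin (n-1), w p * w' p with hs
  have h0ne : (0 : Fin (n+1)) ≠ Fin.last n := by
    simp [Fin.ext_iff]; omega
  have hlne : Fin.last n ≠ (0 : Fin (n+1)) := h0ne.symm
  have hene0 : ∀ p : Fin (n-1),
      (⟨p.1 + 1, by have := p.isLt; omega⟩ : Fin (n+1)) ≠ 0 := by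
    intro p; simp [Fin.ext_iff]
  have henel : ∀ p : Fin (n-1),
      (⟨p.1 + 1, by have := p.isLt; omega⟩ : Fin (n+1)) ≠ Fin.last n := by
    intro p; have := p.isLt; simp [Fin.ext_iff, Fin.last]; omega
  have h0nee : ∀ p : Fin (n-1),
      (0 : Fin (n+1)) ≠ (⟨p.1 + 1, by have := p.isLt; omega⟩ : Fin (n+1)) :=
    fun p => (hene0 p).symm
  have hlnee : ∀ p : Fin (n-1),
      Fin.last n ≠ (⟨p.1 + 1, by have := p.isLt; omega⟩ : Fin (n+1)) :=
    fun p => (henel p).symm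
  set E : Matrix (Fin (n+1)) (Fin (n+1)) ℂ :=
    Matrix.single (Fin.last n) (0 : Fin (n+1)) (1:ℂ) with hEdef
  set x : Matrix (Fin (n+1)) (Fin (n+1)) ℂ :=
    Matrix.single (0 : Fin (n+1)) (Fin.last n) (1:ℂ) with hxdef
  -- W * E = 0
  have hWE : W * E = 0 := by
    rw [hW, hEdef, Matrix.sum_mul]
    refine Finset.sum_eq_zero fun p _ => ?_
    rw [add_mul, Matrix.smul_mul, Matrix.smul_mul,
      Matrix.single_mul_single_of_ne (h := h0ne),
      Matrix.single_mul_single_of_ne (h := (henel p)),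
      smul_zero, smul_zero, add_zero]
  -- E * W = 0
  have hEW : E * W = 0 := by
    rw [hW, hEdef, Matrix.mul_sum]
    refine Finset.sum_eq_zero fun p _ => ?_
    rw [mul_add, Matrix.mul_smul, Matrix.mul_smul,
      Matrix.single_mul_single_of_ne (h := (h0nee p)),
      Matrix.single_mul_single_of_ne (h := h0ne),
      smul_zero, smul_zero, add_zero]
  -- E * x * E = E
  have hExE : E * x * E = E := by
    rw [hEdef, hxdef, Matrix.single_mul_single_same,
      Matrix.single_mul_single_same]
    norm_num
  -- W * W = s • E
  have hWW : W * W = s • E := by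
    nth_rewrite 1 [hW]
    rw [Matrix.sum_mul]
    have key : ∀ p : Fin (n-1),
        (w p • Matrix.single
            (⟨p.1 + 1, by have := p.isLt; omega⟩ : Fin (n+1)) (0 : Fin (n+1)) (1:ℂ) +
         w' p • Matrix.single (Fin.last n)
            (⟨p.1 + 1, by have := p.isLt; omega⟩ : Fin (n+1)) (1:ℂ)) * W
        = (w p * w' p) • E := by
      intro p
      rw [add_mul, Matrix.smul_mul, Matrix.smul_mul]
      have h1 : Matrix.single
          (⟨p.1 + 1, by have := p.isLt; omega⟩ : Fin (n+1)) (0 : Fin (n+1)) (1:ℂ) * W = 0 := by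
        rw [hW, Matrix.mul_sum]
        refine Finset.sum_eq_zero fun q _ => ?_
        rw [mul_add, Matrix.mul_smul, Matrix.mul_smul,
          Matrix.single_mul_single_of_ne (h := (h0nee q)),
          Matrix.single_mul_single_of_ne (h := h0ne),
          smul_zero, smul_zero, add_zero]
      have h2 : Matrix.single (Fin.last n)
          (⟨p.1 + 1, by have := p.isLt; omega⟩ : Fin (n+1)) (1:ℂ) * W
          = w p • E := by
        rw [hW, Matrix.mul_sum]
        rw [Finset.sum_eq_single p]
        · rw [mul_add, Matrix.mul_smul, Matrix.mul_smul,
            Matrix.single_mul_single_same,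
            Matrix.single_mul_single_of_ne (h := (henel p)),
            smul_zero, add_zero, one_mul, hEdef]
        · intro q _ hqp
          have hne : (⟨p.1 + 1, by have := p.isLt; omega⟩ : Fin (n+1)) ≠
              (⟨q.1 + 1, by have := q.isLt; omega⟩ : Fin (n+1)) := by
            simp only [ne_eq, Fin.mk.injEq, add_left_inj]
            exact fun h => hqp (Fin.ext h.symm)
          rw [mul_add, Matrix.mul_smul, Matrix.mul_smul,
            Matrix.single_mul_single_of_ne (h := hne),
            Matrix.single_mul_single_of_ne (h := (henel p)),
            smul_zero, smul_zero, add_zero]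
        · simp
      rw [h1, h2, smul_zero, zero_add, smul_smul, mul_comm]
    rw [Finset.sum_congr rfl fun p _ => key p, ← Finset.sum_smul]
  -- W³ vanishes
  have hW3' : W * (W * W) = 0 := by rw [hWW, Matrix.mul_smul, hWE, smul_zero]
  -- binomial expansion
  have expand : (fun y => W * y - y * W)^[4] x
      = (W * (W * (W * W))) * x - 4 • ((W * (W * W)) * (x * W))
        + 6 • (((W * W) * x) * (W * W)) - 4 • ((W * x) * (W * (W * W)))
        + x * (W * (W * (W * W))) := by
    show W*(W*(W*(W*x - x*W) - (W*x - x*W)*W) - (W*(W*x - x*W) - (W*x - x*W)*W)*W)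
        - (W*(W*(W*x - x*W) - (W*x - x*W)*W) - (W*(W*x - x*W) - (W*x - x*W)*W)*W)*W = _
    simp only [mul_sub, sub_mul, mul_assoc]
    abel
  rw [expand, hW3']
  simp only [Matrix.mul_zero, Matrix.zero_mul, smul_zero, sub_zero, add_zero, zero_add,
    zero_sub, neg_zero]
  rw [hWW, Matrix.smul_mul, Matrix.mul_smul, Matrix.smul_mul, hExE]
  rw [show ((1/4 : ℂ) * s ^ 2) = (1/24 : ℂ) * (6 * (s * s)) by ring]
  simp only [smul_smul, ← Nat.cast_smul_eq_nsmul ℂ]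
  push_cast
  rfl
end

section
/- Let $\mathbf{A}=\frac{1}{2}\sum_{i=1}^m(\Delta^{x_i}\Delta^{x_i'}+\Delta^{x_i'}\Delta^{x_i})$ with $\Delta^{x_i}=-f_0\partial_{f_i'}-f_i\partial_{f_0'}$, $\Delta^{x_i'}=f_0\partial_{f_i}-f_i'\partial_{f_0'}$, and let $f_\psi=\frac{1}{4f_0^3}(a^2-(f_0f_0')^2)$, $a=\sum_i f_if_i'$. Then for all $k\geq 1$: $\mathbf{A}(f_\psi^k)=-k\big(k+\tfrac{m}{2}\big)\frac{a}{f_0}f_\psi^{k-1}$. -/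
set_option maxHeartbeats 2000000 in
/-- with `Δ^{xᵢ} = -f₀∂_{fᵢ'} - fᵢ∂_{f₀'}`, `Δ^{xᵢ'} = f₀∂_{fᵢ} - fᵢ'∂_{f₀'}`,
`𝐀 = ½ ∑ᵢ (Δ^{xᵢ}Δ^{xᵢ'} + Δ^{xᵢ'}Δ^{xᵢ})`, and
`f_ψ = (a² - (f₀f₀')²)/(4f₀³)`, `a = ∑ fᵢfᵢ'`, one has for all `k ≥ 1`:
`𝐀(f_ψᵏ) = -k(k + m/2)·(a/f₀)·f_ψ^{k-1}`. -/
theorem A_of_fpsi_pow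
    {K : Type*} [Field K] [Algebra ℂ K] {m : ℕ}
    (f0 f0' : K) (f f' : Fin m → K)
    (d0' : Derivation ℂ K K) (df df' : Fin m → Derivation ℂ K K)
    (h1 : d0' f0 = 0) (h2 : d0' f0' = 1)
    (h3 : ∀ j, d0' (f j) = 0) (h4 : ∀ j, d0' (f' j) = 0)
    (h5 : ∀ i, df i f0 = 0) (h6 : ∀ i, df i f0' = 0)
    (h7 : ∀ i j, df i (f j) = if i = j then 1 else 0)
    (h8 : ∀ i j, df i (f' j) = 0)
    (h9 : ∀ i, df' i f0 = 0) (h10 : ∀ i, df' i f0' = 0)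
    (h11 : ∀ i j, df' i (f j) = 0)
    (h12 : ∀ i j, df' i (f' j) = if i = j then 1 else 0)
    (hf0 : f0 ≠ 0)
    (a fψ : K)
    (ha : a = ∑ j, f j * f' j)
    (hfψdef : fψ = (a ^ 2 - (f0 * f0') ^ 2) / (4 * f0 ^ 3))
    (Δ Δ' : Fin m → K → K)
    (hΔ : ∀ i g, Δ i g = -f0 * df' i g - f i * d0' g)
    (hΔ' : ∀ i g, Δ' i g = f0 * df i g - f' i * d0' g)
    (A : K → K)
    (hA : ∀ g, A g = (1/2 : K) * ∑ i, (Δ i (Δ' i g) + Δ' i (Δ i g)))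
    (k : ℕ) (hk : 1 ≤ k) :
    A (fψ ^ k) = -((k : K) * ((k : K) + (m : K)/2)) * (a / f0) * fψ ^ (k - 1) := by
  haveI : CharZero K := charZero_of_injective_algebraMap (algebraMap ℂ K).injective
  obtain ⟨n, rfl⟩ : ∃ n, k = n + 1 := ⟨k - 1, (Nat.succ_pred_eq_of_pos hk).symm⟩
  have ha0 : d0' a = 0 := by
    simp [ha, Derivation.leibniz, h3, h4]
  have haf : ∀ i, df i a = f' i := by
    intro i
    simp [ha, Derivation.leibniz, h7, h8, smul_eq_mul, mul_ite, Finset.sum_ite_eq]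
  have haf' : ∀ i, df' i a = f i := by
    intro i
    simp [ha, Derivation.leibniz, h11, h12, smul_eq_mul, mul_ite, Finset.sum_ite_eq]
  have key : ∀ (D : Derivation ℂ K K), D f0 = 0 →
      D fψ = (2*a*D a - 2*f0^2*f0'*(D f0')) / (4*f0^3) := by
    intro D hD
    have hden : D (4 * f0 ^ 3) = 0 := by
      have h4' : D (4 : K) = 0 := by
        rw [show (4:K) = ((4:ℕ):K) by norm_num]; exact D.map_natCast 4
      simp [Derivation.leibniz, Derivation.leibniz_pow, hD, h4']
    rw [hfψdef, Derivation.leibniz_div_const _ _ _ hden, map_sub,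
      Derivation.leibniz_pow, Derivation.leibniz_pow, Derivation.leibniz, hD]
    simp only [smul_eq_mul, nsmul_eq_mul, Nat.cast_ofNat, pow_one, mul_zero, zero_mul]
    field_simp
    ring
  have e0 : d0' fψ = -(f0' / (2*f0)) := by
    rw [key d0' h1, ha0, h2]; field_simp; ring
  have e1 : ∀ i, df i fψ = a * f' i / (2*f0^3) := by
    intro i; rw [key _ (h5 i), haf i, h6 i]; field_simp; ring
  have e2 : ∀ i, df' i fψ = a * f i / (2*f0^3) := by
    intro i; rw [key _ (h9 i), haf' i, h10 i]; field_simp; ring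
  have hD1 : ∀ (D : Derivation ℂ K K), D ((n:K)+1) = 0 := by
    intro D
    rw [show ((n:K)+1) = ((n+1:ℕ):K) by push_cast; ring]
    exact D.map_natCast _
  have hpowD : ∀ (D : Derivation ℂ K K) (r:ℕ), D (fψ ^ r) = (r:K) * (fψ^(r-1) * D fψ) := by
    intro D r; rw [Derivation.leibniz_pow]
    simp only [smul_eq_mul, nsmul_eq_mul]
    all_goals ring
  have prod3 : ∀ (D : Derivation ℂ K K) (u v : K),
      D (((n:K)+1) * u * v) = ((n:K)+1) * (D u * v + u * D v) := by
    intro D u v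
    simp only [Derivation.leibniz, hD1, smul_eq_mul, mul_zero, add_zero, zero_mul]
    ring
  have sQ : ∀ i, Δ' i (fψ ^ (n+1)) =
      ((n:K)+1) * fψ^n * (f' i * (a + f0*f0') / (2*f0^2)) := by
    intro i
    rw [hΔ', hpowD (df i) (n+1), hpowD d0' (n+1), e1 i, e0]
    simp only [Nat.add_sub_cancel]
    push_cast
    field_simp; ring
  have sP : ∀ i, Δ i (fψ ^ (n+1)) =
      ((n:K)+1) * fψ^n * (f i * (f0*f0' - a) / (2*f0^2)) := by
    intro i
    rw [hΔ, hpowD (df' i) (n+1), hpowD d0' (n+1), e2 i, e0]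
    simp only [Nat.add_sub_cancel]
    push_cast
    field_simp; ring
  have main : ∀ i, Δ i (Δ' i (fψ ^ (n+1))) + Δ' i (Δ i (fψ ^ (n+1))) =
      -(((n:K)+1) * (a + 2*((n:K)+1)*(f i * f' i)) / f0) * fψ^n := by
    intro i
    rw [sQ i, sP i, hΔ, hΔ', prod3, prod3, prod3, prod3]
    have dQ1 : df' i (f' i * (a + f0*f0') / (2*f0^2)) = (a + f0*f0' + f i * f' i) / (2*f0^2) := by
      have hden : df' i (2*f0^2 : K) = 0 := by
        have h2' : df' i (2:K) = 0 := by
          rw [show (2:K) = ((2:ℕ):K) by norm_num]; exact (df' i).map_natCast 2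
        simp [Derivation.leibniz, Derivation.leibniz_pow, h9 i, h2']
      rw [Derivation.leibniz_div_const _ _ _ hden]
      simp only [Derivation.leibniz, map_add, haf' i, h9 i, h10 i, h11, h12, smul_eq_mul,
        if_pos rfl, if_true]
      field_simp; ring
    have dQ2 : d0' (f' i * (a + f0*f0') / (2*f0^2)) = f' i * f0 / (2*f0^2) := by
      have hden : d0' (2*f0^2 : K) = 0 := by
        have h2' : d0' (2:K) = 0 := by
          rw [show (2:K) = ((2:ℕ):K) by norm_num]; exact d0'.map_natCast 2
        simp [Derivation.leibniz, Derivation.leibniz_pow, h1, h2']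
      rw [Derivation.leibniz_div_const _ _ _ hden]
      simp only [Derivation.leibniz, map_add, ha0, h1, h2, h4, smul_eq_mul]
      field_simp
      all_goals ring
    have dP1 : df i (f i * (f0*f0' - a) / (2*f0^2)) = (f0*f0' - a - f i * f' i) / (2*f0^2) := by
      have hden : df i (2*f0^2 : K) = 0 := by
        have h2' : df i (2:K) = 0 := by
          rw [show (2:K) = ((2:ℕ):K) by norm_num]; exact (df i).map_natCast 2
        simp [Derivation.leibniz, Derivation.leibniz_pow, h5 i, h2']
      rw [Derivation.leibniz_div_const _ _ _ hden]
      simp only [Derivation.leibniz, map_sub, haf i, h5 i, h6 i, h7, h8, smul_eq_mul,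
        if_pos rfl, if_true]
      field_simp; ring
    have dP2 : d0' (f i * (f0*f0' - a) / (2*f0^2)) = f i * f0 / (2*f0^2) := by
      have hden : d0' (2*f0^2 : K) = 0 := by
        have h2' : d0' (2:K) = 0 := by
          rw [show (2:K) = ((2:ℕ):K) by norm_num]; exact d0'.map_natCast 2
        simp [Derivation.leibniz, Derivation.leibniz_pow, h1, h2']
      rw [Derivation.leibniz_div_const _ _ _ hden]
      simp only [Derivation.leibniz, map_sub, ha0, h1, h2, h3, smul_eq_mul]
      field_simp
      all_goals ring
    rw [dQ1, dQ2, dP1, dP2, hpowD (df' i) n, hpowD d0' n, hpowD (df i) n, e0, e1 i, e2 i]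
    have hmix1 : (n:K) * fψ^(n-1) * fψ = (n:K) * fψ^n := by
      cases n with
      | zero => simp
      | succ p =>
        rw [Nat.add_sub_cancel, pow_succ]
        ring
    have hrel : a ^ 2 - (f0*f0')^2 = 4*f0^3*fψ := by
      rw [hfψdef]; field_simp
    have T1 : -f0 * (((n:K)+1) * ((n:K) * (fψ^(n-1) * (a * f i / (2*f0^3))) *
          (f' i * (a + f0*f0') / (2*f0^2)) + fψ^n * ((a + f0*f0' + f i * f' i) / (2*f0^2))))
        = (-(((n:K)+1))*((n:K)*fψ^(n-1)*(a*(f i)*(f' i))*(a+f0*f0') + 2*f0^3*fψ^n*(a+f0*f0'+(f i)*(f' i))))/(4*f0^4) := by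
      generalize fψ^(n-1) = P
      generalize fψ^n = N
      rw [eq_div_iff (by simp [hf0] : (4:K)*f0^4 ≠ 0)]
      field_simp
      ring
    have T2 : f i * (((n:K)+1) * ((n:K) * (fψ^(n-1) * -(f0' / (2*f0))) *
          (f' i * (a + f0*f0') / (2*f0^2)) + fψ^n * (f' i * f0 / (2*f0^2))))
        = ((((n:K)+1))*(-((n:K)*fψ^(n-1)*((f i)*(f' i)*f0')*(a+f0*f0')*f0) + 2*f0^3*fψ^n*((f i)*(f' i))))/(4*f0^4) := by
      generalize fψ^(n-1) = P
      generalize fψ^n = N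
      rw [eq_div_iff (by simp [hf0] : (4:K)*f0^4 ≠ 0)]
      field_simp
      ring
    have T3 : f0 * (((n:K)+1) * ((n:K) * (fψ^(n-1) * (a * f' i / (2*f0^3))) *
          (f i * (f0*f0' - a) / (2*f0^2)) + fψ^n * ((f0*f0' - a - f i * f' i) / (2*f0^2))))
        = ((((n:K)+1))*((n:K)*fψ^(n-1)*(a*(f i)*(f' i))*(f0*f0'-a) + 2*f0^3*fψ^n*(f0*f0'-a-(f i)*(f' i))))/(4*f0^4) := by
      generalize fψ^(n-1) = P
      generalize fψ^n = N
      rw [eq_div_iff (by simp [hf0] : (4:K)*f0^4 ≠ 0)]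
      field_simp
      ring
    have T4 : f' i * (((n:K)+1) * ((n:K) * (fψ^(n-1) * -(f0' / (2*f0))) *
          (f i * (f0*f0' - a) / (2*f0^2)) + fψ^n * (f i * f0 / (2*f0^2))))
        = ((((n:K)+1))*(-((n:K)*fψ^(n-1)*((f i)*(f' i)*f0')*(f0*f0'-a)*f0) + 2*f0^3*fψ^n*((f i)*(f' i))))/(4*f0^4) := by
      generalize fψ^(n-1) = P
      generalize fψ^n = N
      rw [eq_div_iff (by simp [hf0] : (4:K)*f0^4 ≠ 0)]
      field_simp
      ring
    have NE : (-(((n:K)+1))*((n:K)*fψ^(n-1)*(a*(f i)*(f' i))*(a+f0*f0') + 2*f0^3*fψ^n*(a+f0*f0'+(f i)*(f' i)))) - ((((n:K)+1))*(-((n:K)*fψ^(n-1)*((f i)*(f' i)*f0')*(a+f0*f0')*f0) + 2*f0^3*fψ^n*((f i)*(f' i)))) + (((((n:K)+1))*((n:K)*fψ^(n-1)*(a*(f i)*(f' i))*(f0*f0'-a) + 2*f0^3*fψ^n*(f0*f0'-a-(f i)*(f' i)))) - ((((n:K)+1))*(-((n:K)*fψ^(n-1)*((f i)*(f' i)*f0')*(f0*f0'-a)*f0)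 + 2*f0^3*fψ^n*((f i)*(f' i))))) = -((((n:K)+1))*(a+2*(((n:K)+1))*((f i)*(f' i))))*fψ^n*(4*f0^3) := by
      linear_combination (-2*(((n:K)+1))*(n:K)*fψ^(n-1)*(f i)*(f' i)) * hrel
        + (-8*(((n:K)+1))*f0^3*(f i)*(f' i)) * hmix1
    have Efinal : (-(((n:K)+1))*((n:K)*fψ^(n-1)*(a*(f i)*(f' i))*(a+f0*f0') + 2*f0^3*fψ^n*(a+f0*f0'+(f i)*(f' i))))/(4*f0^4) - ((((n:K)+1))*(-((n:K)*fψ^(n-1)*((f i)*(f' i)*f0')*(a+f0*f0')*f0) + 2*f0^3*fψ^n*((f i)*(f' i))))/(4*f0^4) + (((((n:K)+1))*((n:K)*fψ^(n-1)*(a*(f i)*(f' i))*(f0*f0'-a) + 2*f0^3*fψ^n*(f0*f0'-a-(f i)*(f' i))))/(4*f0^4) - ((((n:K)+1))*(-((n:K)*fψ^(n-1)*((f i)*(f' i)*f0')*(f0*f0'-a)*f0) + 2*f0^3*fψ^n*((f i)*(f' i))))/(4*f0^4))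
        = -(((n:K)+1) * (a + 2*((n:K)+1)*(f i * f' i)) / f0) * fψ^n := by
      have hcomb : (-(((n:K)+1))*((n:K)*fψ^(n-1)*(a*(f i)*(f' i))*(a+f0*f0') + 2*f0^3*fψ^n*(a+f0*f0'+(f i)*(f' i))))/(4*f0^4) - ((((n:K)+1))*(-((n:K)*fψ^(n-1)*((f i)*(f' i)*f0')*(a+f0*f0')*f0) + 2*f0^3*fψ^n*((f i)*(f' i))))/(4*f0^4) + (((((n:K)+1))*((n:K)*fψ^(n-1)*(a*(f i)*(f' i))*(f0*f0'-a) + 2*f0^3*fψ^n*(f0*f0'-a-(f i)*(f' i))))/(4*f0^4) - ((((n:K)+1))*(-((n:K)*fψ^(n-1)*((f i)*(f' i)*f0')*(f0*f0'-a)*f0) + 2*f0^3*fψ^n*((f i)*(f' i))))/(4*f0^4))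
          = ((-(((n:K)+1))*((n:K)*fψ^(n-1)*(a*(f i)*(f' i))*(a+f0*f0') + 2*f0^3*fψ^n*(a+f0*f0'+(f i)*(f' i)))) - ((((n:K)+1))*(-((n:K)*fψ^(n-1)*((f i)*(f' i)*f0')*(a+f0*f0')*f0) + 2*f0^3*fψ^n*((f i)*(f' i)))) + (((((n:K)+1))*((n:K)*fψ^(n-1)*(a*(f i)*(f' i))*(f0*f0'-a) + 2*f0^3*fψ^n*(f0*f0'-a-(f i)*(f' i)))) - ((((n:K)+1))*(-((n:K)*fψ^(n-1)*((f i)*(f' i)*f0')*(f0*f0'-a)*f0) + 2*f0^3*fψ^n*((f i)*(f' i))))))/(4*f0^4) := by ring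
      rw [hcomb, NE, div_eq_iff (by simp [hf0] : (4:K)*f0^4 ≠ 0)]
      field_simp
    linear_combination T1 - T2 + T3 - T4 + Efinal
  have sum_eq : ∑ i, (Δ i (Δ' i (fψ ^ (n+1))) + Δ' i (Δ i (fψ ^ (n+1)))) =
      ∑ i : Fin m, (-(((n:K)+1) * (a + 2*((n:K)+1)*(f i * f' i)) / f0) * fψ^n) :=
    Finset.sum_congr rfl fun i _ => main i
  rw [hA, sum_eq]
  have expand : ∀ i : Fin m, (-(((n:K)+1) * (a + 2*((n:K)+1)*(f i * f' i)) / f0) * fψ^n)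
      = (-(((n:K)+1)*a/f0)*fψ^n) + (-(2*((n:K)+1)*((n:K)+1)/f0)*fψ^n) * (f i * f' i) := by
    intro i; field_simp; ring
  rw [Finset.sum_congr rfl fun i _ => expand i, Finset.sum_add_distrib, Finset.sum_const,
    ← Finset.mul_sum, ← ha]
  simp only [Finset.card_univ, Fintype.card_fin, nsmul_eq_mul, Nat.add_sub_cancel]
  push_cast
  field_simp
  ring
end
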